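/- arXiv:1412.1366 — 2 statements merged into one kernel-verified Lean document; each statement's English description precedes it below -/
import Mathlib

section
/- Let L ∈ M_0 and define ρ_L := sup{t > 0 : L_{t-} = L*_{t-}}. Then ρ_L < ∞ a.s., L_{ρ_L -} = L*_{ρ_L -} = L*_{ρ_L} = L*_∞ a.s., i.e., the left limit of L at ρ_L equals the overall supremum of L. -/
open MeasureTheory Filter Set
open scoped NNReal ENNReal

noncomputable section

variable {Ω : Type*}

/-- Running supremum `L*_t = sup_{0 ≤ s ≤ t} L_s`. -/
def runSup (L : ℝ≥0 → Ω → ℝ) (t : ℝ≥0) (ω : Ω) : ℝ :=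
  ⨆ s : Set.Iic t, L s.1 ω

/-- Overall supremum of a nonnegative process, valued in `ℝ≥0∞`. -/
def supAll (L : ℝ≥0 → Ω → ℝ) (ω : Ω) : ℝ≥0∞ :=
  ⨆ t, ENNReal.ofReal (L t ω)

/-- Overall supremum as a real number. -/
def supAllR (L : ℝ≥0 → Ω → ℝ) (ω : Ω) : ℝ :=
  ⨆ t, L t ω

/-- Left limit of the path at a (possibly infinite) time; at `∞` we take the liminf at
infinity (which is the limit `L_∞` when it exists). -/
def leftLimE (L : ℝ≥0 → Ω → ℝ) (ω : Ω) (r : ℝ≥0∞) : ℝ :=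
  if r ≠ ∞ then Function.leftLim (fun s => L s ω) r.toNNReal
  else Filter.liminf (fun t => L t ω) Filter.atTop

/-- Càdlàg (right-continuous with left limits) real functions on `ℝ≥0`. -/
def Cadlag (f : ℝ≥0 → ℝ) : Prop :=
  (∀ t, ContinuousWithinAt f (Set.Ici t) t) ∧
  ∀ t : ℝ≥0, 0 < t → ∃ l, Tendsto f (nhdsWithin t (Set.Iio t)) (nhds l)

/-- `ℝ≥0∞`-valued stopping time with respect to a filtration indexed by `ℝ≥0`. -/
def IsStoppingTimeE {m : MeasurableSpace Ω} (ℱ : Filtration ℝ≥0 m) (τ : Ω → ℝ≥0∞) : Prop :=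
  ∀ t : ℝ≥0, MeasurableSet[ℱ t] {ω | τ ω ≤ (t : ℝ≥0∞)}

/-- The σ-algebra `F_τ` of events prior to a (possibly infinite) stopping time `τ`. -/
def stoppedSigma {m : MeasurableSpace Ω} (ℱ : Filtration ℝ≥0 m) (τ : Ω → ℝ≥0∞) :
    MeasurableSpace Ω :=
  MeasurableSpace.generateFrom
    {s | ∀ t : ℝ≥0, MeasurableSet[ℱ t] (s ∩ {ω | τ ω ≤ (t : ℝ≥0∞)})}

/-- Predictable stopping time: a stopping time announced by an increasing sequence of
stopping times. -/
def IsPredictableST {m : MeasurableSpace Ω} (ℱ : Filtration ℝ≥0 m) (τ : Ω → ℝ≥0∞) : Prop :=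
  IsStoppingTimeE ℱ τ ∧
  ∃ σ : ℕ → Ω → ℝ≥0∞, (∀ n, IsStoppingTimeE ℱ (σ n)) ∧
    (∀ n ω, σ n ω ≤ σ (n + 1) ω) ∧ (∀ n ω, σ n ω ≤ τ ω) ∧
    (∀ n ω, 0 < τ ω → σ n ω < τ ω) ∧
    ∀ ω, Tendsto (fun n => σ n ω) atTop (nhds (τ ω))

/-- A random time avoids all predictable stopping times. -/
def AvoidsPredictableST {m : MeasurableSpace Ω} (ℱ : Filtration ℝ≥0 m) (μ : Measure Ω)
    (ρ : Ω → ℝ≥0∞) : Prop :=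
  ∀ σ : Ω → ℝ≥0∞, IsPredictableST ℱ σ → μ {ω | ρ ω = σ ω} = 0

/-- A random time avoids all stopping times. -/
def AvoidsAllST {m : MeasurableSpace Ω} (ℱ : Filtration ℝ≥0 m) (μ : Measure Ω)
    (ρ : Ω → ℝ≥0∞) : Prop :=
  ∀ σ : Ω → ℝ≥0∞, IsStoppingTimeE ℱ σ → μ {ω | ρ ω = σ ω} = 0

/-- Totally inaccessible stopping time. -/
def IsTotallyInaccessible {m : MeasurableSpace Ω} (ℱ : Filtration ℝ≥0 m) (μ : Measure Ω)
    (τ : Ω → ℝ≥0∞) : Prop :=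
  IsStoppingTimeE ℱ τ ∧
  ∀ σ : Ω → ℝ≥0∞, IsPredictableST ℱ σ → μ {ω | τ ω = σ ω ∧ τ ω ≠ ∞} = 0

/-- Local martingale, defined via a localizing sequence of finite stopping times. -/
def IsLocalMartingale {m : MeasurableSpace Ω} (ℱ : Filtration ℝ≥0 m) (μ : Measure Ω)
    (L : ℝ≥0 → Ω → ℝ) : Prop :=
  Adapted ℱ L ∧
  ∃ τ : ℕ → Ω → ℝ≥0, (∀ n, IsStoppingTime ℱ (fun ω => ((τ n ω : ℝ≥0) : WithTop ℝ≥0))) ∧ (∀ n ω, τ n ω ≤ τ (n + 1) ω) ∧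
    (∀ᵐ ω ∂μ, Tendsto (fun n => τ n ω) atTop atTop) ∧
    ∀ n, Martingale (fun t ω => L (min (τ n ω) t) ω) ℱ μ

/-- The class `M_0`: nonnegative càdlàg local martingales with `L_0 = 1`, `L_∞ = 0` a.s.,
and continuous running supremum. -/
def MemM0 {m : MeasurableSpace Ω} (ℱ : Filtration ℝ≥0 m) (μ : Measure Ω)
    (L : ℝ≥0 → Ω → ℝ) : Prop :=
  IsLocalMartingale ℱ μ L ∧ (∀ t ω, 0 ≤ L t ω) ∧ (∀ ω, L 0 ω = 1) ∧
  (∀ ω, Cadlag fun t => L t ω) ∧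
  (∀ᵐ ω ∂μ, Tendsto (fun t => L t ω) atTop (nhds 0)) ∧
  ∀ᵐ ω ∂μ, Continuous fun t => runSup L t ω

/-- The (last) time of maximum `ρ_L = sup {t > 0 : L_{t-} = L*_{t-}}`. -/
def rhoL (L : ℝ≥0 → Ω → ℝ) (ω : Ω) : ℝ≥0∞ :=
  ⨆ t ∈ {t : ℝ≥0 | 0 < t ∧
      Function.leftLim (fun s => L s ω) t = Function.leftLim (fun s => runSup L s ω) t},
    (t : ℝ≥0∞)

/-- The time `ρ'_L = sup {t > 0 : L_t = L*_t}`. -/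
def rhoL' (L : ℝ≥0 → Ω → ℝ) (ω : Ω) : ℝ≥0∞ :=
  ⨆ t ∈ {t : ℝ≥0 | 0 < t ∧ L t ω = runSup L t ω}, (t : ℝ≥0∞)

/-- `Z` is (a version of) the Azéma supermartingale of the random time `ρ`:
`Z_t = P(ρ > t | F_t)`. -/
def IsAzema {m : MeasurableSpace Ω} (ℱ : Filtration ℝ≥0 m) (μ : Measure Ω)
    (ρ : Ω → ℝ≥0∞) (Z : ℝ≥0 → Ω → ℝ) : Prop :=
  ∀ t : ℝ≥0, Z t =ᵐ[μ]
    μ[Set.indicator {ω | (t : ℝ≥0∞) < ρ ω} (fun _ => (1 : ℝ)) | ℱ t]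

/-- The predictable σ-algebra on `ℝ≥0 × Ω`, generated by the stochastic intervals
`{0} × A` (`A ∈ F_0`) and `(u, v] × A` (`A ∈ F_u`). -/
def predictableSigma {m : MeasurableSpace Ω} (ℱ : Filtration ℝ≥0 m) :
    MeasurableSpace (ℝ≥0 × Ω) :=
  MeasurableSpace.generateFrom
    ({s | ∃ A : Set Ω, MeasurableSet[ℱ 0] A ∧ s = ({0} : Set ℝ≥0) ×ˢ A} ∪
     {s | ∃ (u v : ℝ≥0) (A : Set Ω), u < v ∧ MeasurableSet[ℱ u] A ∧ s = Set.Ioc u v ×ˢ A})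

/-- The optional σ-algebra on `ℝ≥0 × Ω`, generated by the stochastic intervals
`[[τ, ∞[[` for stopping times `τ`. -/
def optionalSigma {m : MeasurableSpace Ω} (ℱ : Filtration ℝ≥0 m) :
    MeasurableSpace (ℝ≥0 × Ω) :=
  MeasurableSpace.generateFrom
    {s | ∃ τ : Ω → ℝ≥0∞, IsStoppingTimeE ℱ τ ∧
      s = {p : ℝ≥0 × Ω | τ p.2 ≤ (p.1 : ℝ≥0∞)}}

/-- The end of a (random) set `Γ ⊆ ℝ≥0 × Ω`. -/
def endTime (Γ : Set (ℝ≥0 × Ω)) (ω : Ω) : ℝ≥0∞ :=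
  ⨆ t ∈ {t : ℝ≥0 | (t, ω) ∈ Γ}, (t : ℝ≥0∞)

/-- Honest time: for every `t > 0`, `ρ` coincides on `{ρ < t}` with an
`F_t`-measurable random variable. -/
def IsHonest {m : MeasurableSpace Ω} (ℱ : Filtration ℝ≥0 m) (μ : Measure Ω)
    (ρ : Ω → ℝ≥0∞) : Prop :=
  ∀ t : ℝ≥0, 0 < t → ∃ ξ : Ω → ℝ≥0∞, Measurable[ℱ t] ξ ∧
    ∀ᵐ ω ∂μ, ρ ω < (t : ℝ≥0∞) → ρ ω = ξ ω

/-- `a` is the dual projection (w.r.t. the σ-algebra `P` on `ℝ≥0 × Ω`, predictable or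
optional) of the increasing process `1_{[ρ, ∞)}`: `a` is an increasing `P`-measurable
process, given by the distribution functions of a family of measures `κ ω`, such that
`E[∫ X dκ] = E[X_ρ 1_{ρ < ∞}]` for all bounded `P`-measurable `X`. -/
def IsDualProj {m : MeasurableSpace Ω} (ℱ : Filtration ℝ≥0 m) (μ : Measure Ω)
    (ρ : Ω → ℝ≥0∞) (P : MeasurableSpace (ℝ≥0 × Ω)) (a : ℝ≥0 → Ω → ℝ) : Prop :=
  Measurable[P] (Function.uncurry a) ∧
  ∃ κ : Ω → Measure ℝ≥0, (∀ ω, IsFiniteMeasure (κ ω)) ∧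
    (∀ ω t, a t ω = (κ ω (Set.Iic t)).toReal) ∧
    ∀ X : ℝ≥0 → Ω → ℝ, Measurable[P] (Function.uncurry X) →
      (∃ C : ℝ, ∀ t ω, |X t ω| ≤ C) →
      ∫ ω, ∫ t, X t ω ∂(κ ω) ∂μ =
        ∫ ω, (if ρ ω ≠ ∞ then X (ρ ω).toNNReal ω else 0) ∂μ

/-!
The argument is pathwise. Since `L_t → 0 < L_0 = 1`, after some time `T` the path stays below a
level `c < 1 ≤ L*`, so no `t > T` satisfies `L_{t-} = L*_t` and `ρ_L ≤ T`; for the same reason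
`L*_T = L*_∞`. The first time `τ` at which `L*` reaches `L*_∞` is itself a time of maximum: `L*` is
continuous and stays strictly below `L*_τ` before `τ`, which forces `L_{τ-} = L*_τ`. Hence
`L*_{ρ_L} = L*_∞`. Finally `t ↦ L_{t-} - L*_t` is left-continuous and vanishes on the set of times
of maximum, hence also at its supremum `ρ_L`.
-/

open Topology

section RunningSup

variable {f : ℝ≥0 → ℝ} {s t a T : ℝ≥0} {c l : ℝ}

def runningSup (f : ℝ≥0 → ℝ) (t : ℝ≥0) : ℝ :=
  ⨆ s : Iic t, f s.1

def maxTimes (f : ℝ≥0 → ℝ) : Set ℝ≥0 :=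
  {t | 0 < t ∧ Function.leftLim f t = Function.leftLim (runningSup f) t}

-- `rhoL L ω` is definitionally `lastMaxTime (L · ω)`.
def lastMaxTime (f : ℝ≥0 → ℝ) : ℝ≥0∞ :=
  ⨆ t ∈ maxTimes f, (t : ℝ≥0∞)

theorem leftLim_zero (f : ℝ≥0 → ℝ) : Function.leftLim f 0 = f 0 :=
  leftLim_eq_of_isBot fun _ => zero_le

theorem Cadlag.tendsto_leftLim (hf : Cadlag f) (t : ℝ≥0) :
    Tendsto f (𝓝[<] t) (𝓝 (Function.leftLim f t)) := by
  refine tendsto_leftLim_of_tendsto ?_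
  rcases (zero_le (a := t)).eq_or_lt with rfl | ht
  · exact ⟨0, by simp⟩
  · exact hf.2 t ht

theorem Cadlag.leftLim_le (hf : Cadlag f) (ht : 0 < t) (h : ∀ᶠ s in 𝓝[<] t, f s ≤ c) :
    Function.leftLim f t ≤ c :=
  haveI := nhdsLT_neBot_of_exists_lt ⟨0, ht⟩
  le_of_tendsto (hf.tendsto_leftLim t) h

theorem Cadlag.exists_eventually_le (hf : Cadlag f) (t : ℝ≥0) : ∃ C, ∀ᶠ s in 𝓝 t, f s ≤ C := by
  refine ⟨max (Function.leftLim f t + 1) (f t + 1), ?_⟩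
  rw [← nhdsLT_sup_nhdsGE t, eventually_sup]
  exact ⟨((hf.tendsto_leftLim t).eventually (eventually_le_nhds (lt_add_one _))).mono
      fun s hs => le_max_of_le_left hs,
    ((hf.1 t).eventually (eventually_le_nhds (lt_add_one _))).mono
      fun s hs => le_max_of_le_right hs⟩

theorem Cadlag.bddAbove_image_of_isCompact (hf : Cadlag f) {K : Set ℝ≥0} (hK : IsCompact K) :
    BddAbove (f '' K) := by
  refine hK.induction_on (by simp) (fun s t hst ht => ht.mono (image_mono hst))
    (fun s t hs ht => by simpa [image_union] using hs.union ht) fun x _ => ?_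
  obtain ⟨C, hC⟩ := hf.exists_eventually_le x
  exact ⟨{s | f s ≤ C}, mem_nhdsWithin_of_mem_nhds hC, ⟨C, by rintro _ ⟨s, hs, rfl⟩; exact hs⟩⟩

theorem Cadlag.bddAbove_range (hf : Cadlag f) (hlim : Tendsto f atTop (𝓝 l)) :
    BddAbove (range f) := by
  obtain ⟨T, hT⟩ := eventually_atTop.1 (hlim.eventually (eventually_le_nhds (lt_add_one l)))
  obtain ⟨C, hC⟩ := hf.bddAbove_image_of_isCompact (by simpa only [Icc_bot] using isCompact_Icc (a := ⊥) (b := T))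
  refine ⟨max C (l + 1), ?_⟩
  rintro _ ⟨s, rfl⟩
  rcases le_total s T with hs | hs
  · exact le_max_of_le_left (hC ⟨s, hs, rfl⟩)
  · exact le_max_of_le_right (hT s hs)

theorem le_runningSup (hb : BddAbove (range f)) (h : s ≤ t) : f s ≤ runningSup f t :=
  le_ciSup (f := fun s : Iic t => f s.1) (hb.mono (range_comp_subset_range _ f)) ⟨s, h⟩

theorem runningSup_le (h : ∀ s ≤ t, f s ≤ c) : runningSup f t ≤ c :=
  ciSup_le fun s => h s.1 s.2

theorem runningSup_le_iSup (hb : BddAbove (range f)) : runningSup f t ≤ ⨆ s, f s :=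
  runningSup_le fun s _ => le_ciSup hb s

theorem runningSup_mono (hb : BddAbove (range f)) : Monotone (runningSup f) :=
  fun _ _ h => runningSup_le fun _ hw => le_runningSup hb (hw.trans h)

theorem runningSup_zero (hb : BddAbove (range f)) : runningSup f 0 = f 0 :=
  le_antisymm (runningSup_le fun s hs => by rw [nonpos_iff_eq_zero.1 hs])
    (le_runningSup hb le_rfl)

theorem mem_maxTimes_iff (hF : Continuous (runningSup f)) :
    t ∈ maxTimes f ↔ 0 < t ∧ Function.leftLim f t = runningSup f t := by
  rw [maxTimes, mem_ofPred_eq, hF.continuousWithinAt.leftLim_eq]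


theorem leftLim_eq_runningSup_of_forall_lt (hf : Cadlag f) (hb : BddAbove (range f))
    (hF : Continuous (runningSup f)) (ha : 0 < a)
    (hprev : ∀ u < a, runningSup f u < runningSup f a) :
    Function.leftLim f a = runningSup f a := by
  have := nhdsLT_neBot_of_exists_lt ⟨0, ha⟩
  refine le_antisymm (hf.leftLim_le ha (eventually_nhdsWithin_of_forall fun s hs =>
    le_runningSup hb (le_of_lt hs))) (not_lt.1 fun hlt => ?_)
  obtain ⟨c, hlc, hca⟩ := exists_between hlt
  obtain ⟨u, hua, hu⟩ := (mem_nhdsLT_iff_exists_Ioo_subset' ha).1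
    ((hf.tendsto_leftLim a).eventually (eventually_lt_nhds hlc))
  -- On `(u, a)` the path stays below `c`, so the running supremum cannot climb past `max F(u) c`.
  have hFu : ∀ᶠ s in 𝓝[<] a, runningSup f s ≤ max (runningSup f u) c := by
    filter_upwards [Ioo_mem_nhdsLT hua] with s hs
    refine runningSup_le fun w hw => ?_
    rcases le_or_gt w u with hwu | hwu
    · exact le_max_of_le_left (le_runningSup hb hwu)
    · exact le_max_of_le_right (hu ⟨hwu, hw.trans_lt hs.2⟩).le
  have := le_of_tendsto ((hF.tendsto a).mono_left nhdsWithin_le_nhds) hFu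
  exact (this.trans_lt (max_lt (hprev u hua) hca)).false

theorem exists_mem_maxTimes_runningSup_eq_iSup (hf : Cadlag f) (hb : BddAbove (range f))
    (hF : Continuous (runningSup f)) (hT : runningSup f T = ⨆ t, f t) :
    ∃ τ, (τ = 0 ∨ τ ∈ maxTimes f) ∧ runningSup f τ = ⨆ t, f t := by
  set S := {t | runningSup f t = ⨆ t, f t}
  have hτ : sInf S ∈ S := (isClosed_eq hF continuous_const).csInf_mem ⟨T, hT⟩ (OrderBot.bddBelow S)
  refine ⟨sInf S, (zero_le (a := sInf S)).eq_or_lt.imp Eq.symm fun hpos => ?_, hτ⟩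
  refine (mem_maxTimes_iff hF).2 ⟨hpos, leftLim_eq_runningSup_of_forall_lt hf hb hF hpos
    fun u hu => ?_⟩
  rw [hτ]
  exact (runningSup_le_iSup hb).lt_of_ne fun h => not_le.2 hu (csInf_le (OrderBot.bddBelow S) h)

theorem runningSup_eq_iSup_of_forall_ge_le (hb : BddAbove (range f)) (hc : c < f 0)
    (hT : ∀ t ≥ T, f t ≤ c) : runningSup f T = ⨆ t, f t := by
  refine le_antisymm (runningSup_le_iSup hb) (ciSup_le fun t => ?_)
  rcases le_total t T with htT | hTt
  · exact le_runningSup hb htT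
  · exact (hT t hTt).trans (hc.le.trans (le_runningSup hb zero_le))

theorem maxTimes_subset_Iic (hf : Cadlag f) (hb : BddAbove (range f))
    (hF : Continuous (runningSup f)) (hc : c < f 0) (hT : ∀ t ≥ T, f t ≤ c) :
    maxTimes f ⊆ Iic T := by
  intro t ht
  rw [mem_maxTimes_iff hF] at ht
  by_contra hTt
  rw [mem_Iic, not_le] at hTt
  have hleft : Function.leftLim f t ≤ c := hf.leftLim_le ht.1
    (eventually_of_mem (Ioo_mem_nhdsLT hTt) fun s hs => hT s hs.1.le)
  have := le_runningSup hb (zero_le (a := t))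
  linarith [ht.2]

theorem leftLim_sSup_maxTimes (hf : Cadlag f) (hb : BddAbove (range f))
    (hF : Continuous (runningSup f)) (hA : BddAbove (maxTimes f)) :
    Function.leftLim f (sSup (maxTimes f)) = runningSup f (sSup (maxTimes f)) := by
  rcases (maxTimes f).eq_empty_or_nonempty with hA₀ | hA₀
  · rw [hA₀, csSup_empty, bot_eq_zero, leftLim_zero, runningSup_zero hb]
  -- `t ↦ f(t-) - F(t)` is left-continuous and vanishes on `maxTimes f`, so also at its supremum.
  set g := fun t => Function.leftLim f t - runningSup f t
  have hg : ContinuousWithinAt g (maxTimes f) (sSup (maxTimes f)) :=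
    ((continuousWithinAt_leftLim_Iic (hf.tendsto_leftLim _)).sub
      hF.continuousWithinAt).mono fun t ht => le_csSup hA ht
  have hg₀ : g '' maxTimes f ⊆ {0} := by
    rintro _ ⟨t, ht, rfl⟩
    exact sub_eq_zero.2 ((mem_maxTimes_iff hF).1 ht).2
  have := closure_mono hg₀ (hg.mem_closure_image (csSup_mem_closure hA₀ hA))
  rw [closure_singleton] at this
  exact sub_eq_zero.1 this

theorem lastMaxTime_spec (hf : Cadlag f) (hlim : Tendsto f atTop (𝓝 l)) (hl : l < f 0)
    (hF : Continuous (runningSup f)) :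
    lastMaxTime f < ∞ ∧
      Function.leftLim f (lastMaxTime f).toNNReal = ⨆ t, f t ∧
      Function.leftLim (runningSup f) (lastMaxTime f).toNNReal = ⨆ t, f t ∧
      runningSup f (lastMaxTime f).toNNReal = ⨆ t, f t := by
  have hb := hf.bddAbove_range hlim
  obtain ⟨c, hlc, hc⟩ := exists_between hl
  obtain ⟨T, hT⟩ := eventually_atTop.1 (hlim.eventually (eventually_le_nhds hlc))
  have hA : BddAbove (maxTimes f) := ⟨T, maxTimes_subset_Iic hf hb hF hc hT⟩
  have hρ : lastMaxTime f = ↑(sSup (maxTimes f)) := (ENNReal.coe_sSup hA).symm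
  obtain ⟨τ, hτA, hτ⟩ :=
    exists_mem_maxTimes_runningSup_eq_iSup hf hb hF (runningSup_eq_iSup_of_forall_ge_le hb hc hT)
  have hτρ : τ ≤ sSup (maxTimes f) := hτA.elim (fun h => h ▸ zero_le) (le_csSup hA)
  have hFρ : runningSup f (sSup (maxTimes f)) = ⨆ t, f t :=
    le_antisymm (runningSup_le_iSup hb) (hτ ▸ runningSup_mono hb hτρ)
  rw [hρ, ENNReal.toNNReal_coe, hF.continuousWithinAt.leftLim_eq,
    leftLim_sSup_maxTimes hf hb hF hA, hFρ]
  exact ⟨ENNReal.coe_lt_top, rfl, rfl, rfl⟩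

end RunningSup

theorem rhoL_finite_and_attains_max_general {m : MeasurableSpace Ω} (ℱ : Filtration ℝ≥0 m)
    (μ : Measure Ω) (L : ℝ≥0 → Ω → ℝ) (hL : MemM0 ℱ μ L) :
    ∀ᵐ ω ∂μ, rhoL L ω < ∞ ∧
      Function.leftLim (fun s => L s ω) (rhoL L ω).toNNReal = supAllR L ω ∧
      Function.leftLim (fun s => runSup L s ω) (rhoL L ω).toNNReal = supAllR L ω ∧
      runSup L (rhoL L ω).toNNReal ω = supAllR L ω := by
  obtain ⟨-, -, hL₀, hcadlag, hlim, hsup⟩ := hL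
  filter_upwards [hlim, hsup] with ω hlimω hsupω
  exact lastMaxTime_spec (hcadlag ω) hlimω (by rw [hL₀ ω]; exact one_pos) hsupω

/-- For `L ∈ M_0`, the time of maximum `ρ_L` is a.s. finite and
`L_{ρ_L -} = L*_{ρ_L -} = L*_{ρ_L} = L*_∞` a.s. -/
theorem rhoL_finite_and_attains_max {m : MeasurableSpace Ω} (ℱ : Filtration ℝ≥0 m)
    (μ : Measure Ω) [IsProbabilityMeasure μ] (L : ℝ≥0 → Ω → ℝ) (hL : MemM0 ℱ μ L) :
    ∀ᵐ ω ∂μ, rhoL L ω < ∞ ∧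
      Function.leftLim (fun s => L s ω) (rhoL L ω).toNNReal = supAllR L ω ∧
      Function.leftLim (fun s => runSup L s ω) (rhoL L ω).toNNReal = supAllR L ω ∧
      runSup L (rhoL L ω).toNNReal ω = supAllR L ω :=
  rhoL_finite_and_attains_max_general ℱ μ L hL

end
end

section
/- Let ρ be a random time that avoids all F-predictable stopping times. Then ρ is a totally inaccessible stopping time in the progressively enlarged filtration F^ρ, the smallest right-continuous filtration containing F and making ρ a stopping time. -/
open MeasureTheory Filter Set
open scoped NNReal ENNReal

noncomputable section

variable {Ω : Type*}

/-!
Every `F^ρ`-stopping time `σ` agrees before `ρ` with a stopping time `γ` of the right-continuous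
regularisation `F₊`: on `{t < ρ}` the map `ρ ∧ t` is constant, so `F_t ∨ σ(ρ ∧ t)` traces down
to `F_t` there. If `σ` is `F^ρ`-predictable, announced by `σ n`, then on `{0 < ρ = σ}` the time
`ρ` is announced by the `F₊`-stopping times `γ n`. This can only happen on a null set: shifting
`γ n` by small `δ n > 0` gives `F`-stopping times (an `F₊`-stopping time plus `δ > 0` is one),
whose running maxima stay below `ρ` outside a set of measure at most `ε`; their limit, restricted
to the event where it is not attained, is an `F`-predictable time equal to `ρ` there. Finally `{ρ = 0}` is null since `ρ` avoids the
predictable time `0`.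
-/

section StoppingTimes

-- `ℝ≥0∞` is `WithTop ℝ≥0`, so `IsStoppingTimeE` is definitionally Mathlib's `IsStoppingTime`.
variable {m : MeasurableSpace Ω} {ℱ : Filtration ℝ≥0 m} {μ : Measure Ω}

lemma MeasureTheory.Filtration.rightCont_le_of_lt {ι : Type*} [LinearOrder ι]
    [DenselyOrdered ι] [NoMaxOrder ι] (𝓕 : Filtration ι m) {i j : ι} (hij : i < j) :
    𝓕.rightCont i ≤ 𝓕 j := by
  rw [Filtration.rightCont_eq]
  exact iInf₂_le j hij

lemma isStoppingTimeE_add_of_rightCont {τ : Ω → ℝ≥0∞} (hτ : IsStoppingTimeE ℱ.rightCont τ)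
    {δ : ℝ≥0} (hδ : 0 < δ) : IsStoppingTimeE ℱ fun ω => τ ω + δ := by
  intro t
  by_cases hδt : δ ≤ t
  · have hset : {ω | τ ω + δ ≤ t} = {ω | τ ω ≤ ↑(t - δ)} := by
      ext ω
      simp only [mem_ofPred_eq, ENNReal.coe_sub]
      rw [ENNReal.le_sub_iff_add_le_right ENNReal.coe_ne_top (by exact_mod_cast hδt)]
    rw [hset]
    exact ℱ.rightCont_le_of_lt (tsub_lt_self (hδ.trans_le hδt) hδ) _ (hτ (t - δ))
  · convert @MeasurableSet.empty Ω (ℱ t)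
    ext ω
    simp only [mem_ofPred_eq, mem_empty_iff_false, iff_false, not_le]
    exact (ENNReal.coe_lt_coe.mpr (not_le.mp hδt)).trans_le le_add_self

lemma measurableSet_lt_of_forall_lt_le {τ : Ω → ℝ≥0∞} (hτ : IsStoppingTimeE ℱ τ)
    {m' : MeasurableSpace Ω} {t : ℝ≥0} (hm' : ∀ s < t, ℱ s ≤ m') :
    MeasurableSet[m'] {ω | τ ω < t} := by
  have hset : {ω | τ ω < t} =
      ⋃ (q : ℚ) (_ : (q : ℝ).toNNReal < t), {ω | τ ω ≤ (q : ℝ).toNNReal} := by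
    ext ω
    simp only [mem_ofPred_eq, mem_iUnion, exists_prop]
    constructor
    · intro h
      obtain ⟨q, -, hτq, hqt⟩ := ENNReal.lt_iff_exists_rat_btwn.mp h
      exact ⟨q, ENNReal.coe_lt_coe.mp hqt, hτq.le⟩
    · rintro ⟨q, hqt, hτq⟩
      exact hτq.trans_lt (ENNReal.coe_lt_coe.mpr hqt)
  rw [hset]
  exact MeasurableSet.iUnion fun q => MeasurableSet.iUnion fun hq => hm' _ hq _ (hτ _)

lemma exists_measurableSet_inter_eq_of_sup_comap {β : Type*} [MeasurableSpace β]
    {m₀ : MeasurableSpace Ω} {f : Ω → β} {T : Set Ω} {b : β} (hf : ∀ ω ∈ T, f ω = b)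
    {A : Set Ω} (hA : MeasurableSet[m₀ ⊔ MeasurableSpace.comap f inferInstance] A) :
    ∃ B, MeasurableSet[m₀] B ∧ T ∩ A = T ∩ B := by
  have hAT : MeasurableSet[(m₀ ⊔ MeasurableSpace.comap f inferInstance).comap ((↑) : T → Ω)]
      ((↑) ⁻¹' A) := ⟨A, hA, rfl⟩
  have hfT : f ∘ ((↑) : T → Ω) = fun _ => b := funext fun ω => hf ω ω.2
  rw [MeasurableSpace.comap_sup, MeasurableSpace.comap_comp, hfT, MeasurableSpace.comap_const,
    sup_bot_eq] at hAT
  obtain ⟨B, hB, hBA⟩ := hAT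
  exact ⟨B, hB, (Subtype.preimage_coe_eq_preimage_coe_iff.mp hBA).symm⟩

lemma exists_isStoppingTimeE_rightCont_eq_of_mem_iff {σ ρ : Ω → ℝ≥0∞} {C : ℝ≥0 → Set Ω}
    (hC : ∀ t, MeasurableSet[ℱ t] (C t)) (hCσ : ∀ (t : ℝ≥0) ω, ↑t < ρ ω → (ω ∈ C t ↔ σ ω < t)) :
    ∃ γ : Ω → ℝ≥0∞, IsStoppingTimeE ℱ.rightCont γ ∧ ∀ ω, σ ω < ρ ω → γ ω = σ ω := by
  let γ : Ω → ℝ≥0∞ := fun ω =>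
    ⨅ (q : ℚ) (_ : ω ∈ C (q : ℝ).toNNReal), ((q : ℝ).toNNReal : ℝ≥0∞)
  have hγ_lt : ∀ ω (c : ℝ≥0∞),
      γ ω < c ↔ ∃ q : ℚ, ω ∈ C (q : ℝ).toNNReal ∧ ↑(q : ℝ).toNNReal < c := by
    intro ω c
    simp only [γ, iInf_lt_iff, exists_prop]
  refine ⟨γ, isStoppingTime_of_measurableSet_lt_of_isRightContinuous fun t => ?_, fun ω hσρ => ?_⟩
  · change MeasurableSet[ℱ.rightCont t] {ω | γ ω < (t : ℝ≥0∞)}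
    have hset : {ω | γ ω < (t : ℝ≥0∞)} =
        ⋃ (q : ℚ) (_ : (q : ℝ).toNNReal < t), C (q : ℝ).toNNReal := by
      ext ω
      simp only [mem_ofPred_eq, mem_iUnion, hγ_lt, ENNReal.coe_lt_coe, exists_prop, and_comm]
    rw [hset]
    exact ℱ.le_rightCont t _ (MeasurableSet.iUnion fun q => MeasurableSet.iUnion fun hq =>
      ℱ.mono hq.le _ (hC _))
  · refine le_antisymm (le_of_not_gt fun hσγ => ?_) (le_of_not_gt fun hγσ => ?_)
    · obtain ⟨q, -, hσq, hq⟩ := ENNReal.lt_iff_exists_rat_btwn.mp (lt_min hσγ hσρ)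
      have hqγ : γ ω < γ ω := (hγ_lt ω _).mpr
        ⟨q, (hCσ _ ω (hq.trans_le (min_le_right _ _))).mpr hσq, hq.trans_le (min_le_left _ _)⟩
      exact hqγ.false
    · obtain ⟨q, hCq, hqσ⟩ := (hγ_lt ω _).mp hγσ
      exact ((hCσ _ ω (hqσ.trans hσρ)).mp hCq).not_gt hqσ

lemma exists_isStoppingTimeE_rightCont_eq_of_lt {𝒢 : Filtration ℝ≥0 m} {ρ : Ω → ℝ≥0∞}
    (h𝒢 : ∀ s t : ℝ≥0, s < t → 𝒢 s ≤ ℱ t ⊔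
      MeasurableSpace.comap (fun ω => min (ρ ω) (t : ℝ≥0∞)) inferInstance)
    {σ : Ω → ℝ≥0∞} (hσ : IsStoppingTimeE 𝒢 σ) :
    ∃ γ : Ω → ℝ≥0∞, IsStoppingTimeE ℱ.rightCont γ ∧ ∀ ω, σ ω < ρ ω → γ ω = σ ω := by
  have hC : ∀ t : ℝ≥0, ∃ C, MeasurableSet[ℱ t] C ∧
      {ω | ↑t < ρ ω} ∩ {ω | σ ω < t} = {ω | ↑t < ρ ω} ∩ C := fun t =>
    exists_measurableSet_inter_eq_of_sup_comap (fun ω (hω : ↑t < ρ ω) => min_eq_right hω.le)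
      (measurableSet_lt_of_forall_lt_le hσ fun s hs => h𝒢 s t hs)
  choose C hCm hCσ using hC
  refine exists_isStoppingTimeE_rightCont_eq_of_mem_iff hCm fun t ω hω => ?_
  have := congrArg (ω ∈ ·) (hCσ t)
  simp only [mem_inter_iff, mem_ofPred_eq, eq_iff_iff, hω, true_and] at this
  exact this.symm

lemma isStoppingTimeE_of_le_iInf_sup_comap {𝒢 : Filtration ℝ≥0 m} {ρ : Ω → ℝ≥0∞}
    (h𝒢 : ∀ t : ℝ≥0, ⨅ s ∈ Ioi t, ((ℱ s : MeasurableSpace Ω) ⊔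
      MeasurableSpace.comap (fun ω => min (ρ ω) (s : ℝ≥0∞)) inferInstance) ≤ 𝒢 t) :
    IsStoppingTimeE 𝒢 ρ := by
  intro t
  refine h𝒢 t _ ?_
  simp only [MeasurableSpace.measurableSet_iInf]
  intro s hs
  refine le_sup_right (a := (ℱ s : MeasurableSpace Ω)) _ ⟨Iic (t : ℝ≥0∞), measurableSet_Iic, ?_⟩
  ext ω
  simp [not_le.mpr (ENNReal.coe_lt_coe.mpr hs)]

lemma isPredictableST_zero : IsPredictableST ℱ fun _ => 0 :=
  ⟨isStoppingTime_const ℱ 0, fun _ _ => 0, fun _ => isStoppingTime_const ℱ 0,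
    fun _ _ => le_rfl, fun _ _ => le_rfl, fun _ _ h => h, fun _ => tendsto_const_nhds⟩

lemma isStoppingTimeE_partialSups {τ : ℕ → Ω → ℝ≥0∞} (hτ : ∀ n, IsStoppingTimeE ℱ (τ n))
    (n : ℕ) : IsStoppingTimeE ℱ fun ω => partialSups (fun k => τ k ω) n := by
  intro t
  simp only [partialSups_le_iff, ofPred_forall]
  exact MeasurableSet.iInter fun k => MeasurableSet.iInter fun _ => hτ k t

open Classical in
def restrictedLimit (τ : ℕ → Ω → ℝ≥0∞) (ω : Ω) : ℝ≥0∞ :=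
  if ∀ n, τ n ω < ⨆ k, τ k ω then ⨆ k, τ k ω else ∞

lemma restrictedLimit_eq {τ : ℕ → Ω → ℝ≥0∞} {ω : Ω} {a : ℝ≥0∞} (hlt : ∀ n, τ n ω < a)
    (hle : a ≤ ⨆ n, τ n ω) : restrictedLimit τ ω = a := by
  have hsup : ⨆ n, τ n ω = a := le_antisymm (iSup_le fun n => (hlt n).le) hle
  simp only [restrictedLimit, hsup, hlt, implies_true, if_true]

lemma measurableSet_le_and_lt_iSup {τ : ℕ → Ω → ℝ≥0∞} (hτ : ∀ n, IsStoppingTimeE ℱ (τ n))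
    (n : ℕ) (t : ℝ≥0) : MeasurableSet[ℱ t] {ω | τ n ω ≤ t ∧ τ n ω < ⨆ k, τ k ω} := by
  have hset : {ω | τ n ω ≤ t ∧ τ n ω < ⨆ k, τ k ω} =
      ⋃ k, {ω | τ k ω ≤ τ n ω}ᶜ ∩ {ω | τ n ω ≤ t} := by
    ext ω
    simp only [mem_ofPred_eq, mem_iUnion, mem_inter_iff, mem_compl_iff, not_le, lt_iSup_iff]
    tauto
  rw [hset]
  refine MeasurableSet.iUnion fun k => ?_
  have hF : MeasurableSet[IsStoppingTime.measurableSpace (hτ n)] {ω | τ k ω ≤ τ n ω}ᶜ :=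
    (IsStoppingTime.measurableSet_stopping_time_le (hτ k) (hτ n)).compl
  exact ((IsStoppingTime.measurableSet (hτ n) _).mp hF).2 t

lemma isPredictableST_restrictedLimit {τ : ℕ → Ω → ℝ≥0∞} (hτ : ∀ n, IsStoppingTimeE ℱ (τ n))
    (hmono : ∀ ω, Monotone fun n => τ n ω) : IsPredictableST ℱ (restrictedLimit τ) := by
  classical
  set g : ℕ → Ω → ℝ≥0∞ := fun n ω => if τ n ω < ⨆ k, τ k ω then τ n ω else ∞ with hg_def
  have hg : ∀ n, IsStoppingTimeE ℱ (g n) := by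
    intro n t
    have hset : {ω | g n ω ≤ t} = {ω | τ n ω ≤ t ∧ τ n ω < ⨆ k, τ k ω} := by
      ext ω
      by_cases h : τ n ω < ⨆ k, τ k ω <;> simp [hg_def, h]
    exact hset ▸ measurableSet_le_and_lt_iSup hτ n t
  have hg_mono : ∀ ω, Monotone fun n => g n ω := by
    intro ω a b hab
    by_cases hb : τ b ω < ⨆ k, τ k ω
    · have ha : τ a ω < ⨆ k, τ k ω := (hmono ω hab).trans_lt hb
      simpa [hg_def, ha, hb] using hmono ω hab
    · simp [hg_def, hb]
  have hlim : ∀ ω, restrictedLimit τ ω = ⨆ n, g n ω := by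
    intro ω
    by_cases h : ∀ n, τ n ω < ⨆ k, τ k ω
    · simp [restrictedLimit, hg_def, h]
    · obtain ⟨n, hn⟩ := not_forall.mp h
      simp only [restrictedLimit, h, if_false]
      exact (top_unique (le_iSup_of_le n (by simp [hg_def, hn]))).symm
  set ζ : ℕ → Ω → ℝ≥0∞ := fun n ω => min (g n ω) ((n : ℝ≥0) : ℝ≥0∞)
  have hζ_lt : ∀ n ω, ζ n ω < restrictedLimit τ ω := by
    intro n ω
    by_cases h : ∀ k, τ k ω < ⨆ k, τ k ω
    · simp only [restrictedLimit, h, implies_true, if_true]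
      exact (min_le_left _ _).trans_lt (by simp [hg_def, h n])
    · simp only [restrictedLimit, h, if_false]
      exact (min_le_right _ _).trans_lt ENNReal.coe_lt_top
  refine ⟨?_, ζ, fun n => IsStoppingTime.min (hg n) (isStoppingTime_const ℱ n),
    fun n ω => min_le_min (hg_mono ω n.le_succ) (by simp), fun n ω => (hζ_lt n ω).le,
    fun n ω _ => hζ_lt n ω, fun ω => ?_⟩
  · intro t
    simp only [hlim, iSup_le_iff, ofPred_forall]
    exact MeasurableSet.iInter fun n => hg n t
  · have hn : Tendsto (fun n : ℕ => ((n : ℝ≥0) : ℝ≥0∞)) atTop (nhds ∞) := by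
      simp [ENNReal.tendsto_nat_nhds_top]
    rw [hlim, ← min_top_right (⨆ n, g n ω)]
    exact (tendsto_atTop_iSup (hg_mono ω)).min hn

lemma exists_pos_measure_lt_le_add_lt [IsFiniteMeasure μ] {f g : Ω → ℝ≥0∞}
    (hf : Measurable f) (hg : Measurable g) {ε : ℝ≥0∞} (hε : 0 < ε) :
    ∃ δ : ℝ≥0, 0 < δ ∧ μ {ω | f ω < g ω ∧ g ω ≤ f ω + δ} < ε := by
  let s : ℝ≥0 → Set Ω := fun δ => {ω | f ω < g ω ∧ g ω ≤ f ω + δ}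
  have hempty : ⋂ δ > 0, s δ = ∅ := by
    refine eq_empty_of_forall_notMem fun ω hω => ?_
    simp only [mem_iInter, s, mem_ofPred_eq] at hω
    have hle : g ω ≤ f ω := ENNReal.le_of_forall_pos_le_add fun δ hδ _ => (hω δ hδ).2
    exact (hω 1 one_pos).1.not_ge hle
  have hlim := tendsto_measure_biInter_gt (μ := μ) (s := s) (a := 0)
    (fun δ _ => ((measurableSet_lt hf hg).inter
      (measurableSet_le hg (hf.add_const _))).nullMeasurableSet)
    (fun i j _ hij ω hω => ⟨hω.1, hω.2.trans (by gcongr)⟩) ⟨1, one_pos, measure_ne_top μ _⟩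
  rw [hempty, measure_empty] at hlim
  obtain ⟨δ, hδμ, hδ⟩ := ((hlim.eventually (gt_mem_nhds hε)).and self_mem_nhdsWithin).exists
  exact ⟨δ, hδ, hδμ⟩

theorem AvoidsPredictableST.measure_forall_lt_le_iSup_eq_zero [IsFiniteMeasure μ]
    {ρ : Ω → ℝ≥0∞} (havoid : AvoidsPredictableST ℱ μ ρ) (hρ : Measurable ρ)
    {γ : ℕ → Ω → ℝ≥0∞} (hγ : ∀ k, IsStoppingTimeE ℱ.rightCont (γ k)) :
    μ {ω | (∀ k, γ k ω < ρ ω) ∧ ρ ω ≤ ⨆ k, γ k ω} = 0 := by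
  refine nonpos_iff_eq_zero.mp (ENNReal.le_of_forall_pos_le_add fun ε hε _ => ?_)
  obtain ⟨ε', hε'pos, hε'sum⟩ := ENNReal.exists_pos_sum_of_countable
    (ENNReal.coe_ne_zero.mpr hε.ne') ℕ
  choose δ hδpos hδμ using fun k => exists_pos_measure_lt_le_add_lt (μ := μ)
    (IsStoppingTime.measurable' (hγ k)) hρ (ENNReal.coe_pos.mpr (hε'pos k))
  let ξ : ℕ → Ω → ℝ≥0∞ := fun n ω => partialSups (fun k => γ k ω + δ k) n
  have hpred : IsPredictableST ℱ (restrictedLimit ξ) := isPredictableST_restrictedLimit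
    (isStoppingTimeE_partialSups fun k => isStoppingTimeE_add_of_rightCont (hγ k) (hδpos k))
    fun ω => (partialSups _).monotone
  have hcover : {ω | (∀ k, γ k ω < ρ ω) ∧ ρ ω ≤ ⨆ k, γ k ω} ⊆
      (⋃ k, {ω | γ k ω < ρ ω ∧ ρ ω ≤ γ k ω + δ k}) ∪ {ω | ρ ω = restrictedLimit ξ ω} := by
    rintro ω ⟨hlt, hle⟩
    by_cases hbad : ∃ k, ρ ω ≤ γ k ω + δ k
    · obtain ⟨k, hk⟩ := hbad
      exact Or.inl (mem_iUnion.mpr ⟨k, hlt k, hk⟩)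
    · simp only [not_exists, not_le] at hbad
      refine Or.inr (restrictedLimit_eq (fun n => ?_) ?_).symm
      · exact (partialSups_iff_forall (· < ρ ω) sup_lt_iff).mpr fun k _ => hbad k
      · rw [iSup_partialSups_eq]
        exact hle.trans (iSup_mono fun k => le_self_add)
  calc μ {ω | (∀ k, γ k ω < ρ ω) ∧ ρ ω ≤ ⨆ k, γ k ω}
      ≤ μ (⋃ k, {ω | γ k ω < ρ ω ∧ ρ ω ≤ γ k ω + δ k}) + μ {ω | ρ ω = restrictedLimit ξ ω} :=
        (measure_mono hcover).trans (measure_union_le _ _)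
    _ ≤ ∑' k, (ε' k : ℝ≥0∞) + 0 :=
        add_le_add ((measure_iUnion_le _).trans (ENNReal.tsum_le_tsum fun k => (hδμ k).le))
          (havoid _ hpred).le
    _ ≤ 0 + ε := by simpa using hε'sum.le

end StoppingTimes

theorem totally_inaccessible_in_enlarged_filtration_general {m : MeasurableSpace Ω}
    (ℱ : Filtration ℝ≥0 m) (μ : Measure Ω) [IsProbabilityMeasure μ]
    (ρ : Ω → ℝ≥0∞) (hρmeas : Measurable ρ)
    (havoid : AvoidsPredictableST ℱ μ ρ)
    (𝒢 : Filtration ℝ≥0 m)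
    (h𝒢 : ∀ t : ℝ≥0, (𝒢 t : MeasurableSpace Ω) =
      ⨅ s ∈ Set.Ioi t, ((ℱ s : MeasurableSpace Ω) ⊔
        MeasurableSpace.comap (fun ω => min (ρ ω) (s : ℝ≥0∞)) inferInstance)) :
    IsTotallyInaccessible 𝒢 μ ρ := by
  refine ⟨isStoppingTimeE_of_le_iInf_sup_comap fun t => (h𝒢 t).ge, fun σ hσ => ?_⟩
  obtain ⟨-, σn, hσn, -, -, hσn_lt, hσn_lim⟩ := hσ
  choose γ hγ hγσ using fun n => exists_isStoppingTimeE_rightCont_eq_of_lt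
    (fun s t hst => (h𝒢 s).le.trans (iInf₂_le t hst)) (hσn n)
  have hρ0 : μ {ω | ρ ω = 0} = 0 := havoid _ isPredictableST_zero
  refine measure_mono_null (fun ω ⟨hρσ, _⟩ => ?_)
    (measure_union_null (havoid.measure_forall_lt_le_iSup_eq_zero hρmeas hγ) hρ0)
  rcases eq_zero_or_pos (ρ ω) with hzero | hpos
  · exact Or.inr hzero
  · have hlt : ∀ n, σn n ω < ρ ω := fun n => hρσ ▸ hσn_lt n ω (hρσ ▸ hpos)
    refine Or.inl ⟨fun n => hγσ n ω (hlt n) ▸ hlt n, ?_⟩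
    rw [hρσ]
    exact le_of_tendsto' (hσn_lim ω) fun n => hγσ n ω (hlt n) ▸ le_iSup (fun k => γ k ω) n

/-- A random time avoiding all `F`-predictable stopping times is a totally inaccessible
stopping time in the progressively enlarged filtration
`F^ρ_t = ⋂_{s > t} (F_s ∨ σ(ρ ∧ s))`. -/
theorem totally_inaccessible_in_enlarged_filtration {m : MeasurableSpace Ω}
    (ℱ : Filtration ℝ≥0 m) (μ : Measure Ω) [IsProbabilityMeasure μ]
    (ρ : Ω → ℝ≥0∞) (hρmeas : Measurable ρ)
    (hρ : μ {ω | 0 < ρ ω ∧ ρ ω < ∞} = 1)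
    (havoid : AvoidsPredictableST ℱ μ ρ)
    (𝒢 : Filtration ℝ≥0 m)
    (h𝒢 : ∀ t : ℝ≥0, (𝒢 t : MeasurableSpace Ω) =
      ⨅ s ∈ Set.Ioi t, ((ℱ s : MeasurableSpace Ω) ⊔
        MeasurableSpace.comap (fun ω => min (ρ ω) (s : ℝ≥0∞)) inferInstance)) :
    IsTotallyInaccessible 𝒢 μ ρ :=
  totally_inaccessible_in_enlarged_filtration_general ℱ μ ρ hρmeas havoid 𝒢 h𝒢

end
end
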